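/- arXiv:0903.1854 — 3 statements merged into one kernel-verified Lean document; each statement's English description precedes it below -/
import Mathlib

section
/- Let Λ ≥ 2 and let χ_Λ be an ultraviolet cutoff function. For every C > 0 there exist C' > 0 and α₀ ∈ (0, 1) such that for every α ∈ (0, α₀) and every measurable f : ℝ³ → [0, ∞) satisfying, for almost every k ∈ ℝ³, f(k) ≤ C α^{−3/2} (1 + |log|k||) χ_Λ(|k|)² / |k|, and additionally ∫_{ℝ³} |k| f(k) dk ≤ C α⁴ log(1/α), one has ∫_{ℝ³} f(k) dk ≤ C' α^{33/16}. -/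
open MeasureTheory

/-- `χ : ℝ → ℝ` is an ultraviolet cutoff function at scale `Λ`: it is `C¹`,
takes values in `[0,1]`, equals `1` on `[0, Λ-1]` and vanishes on `[Λ, ∞)`. -/
def IsUVCutoff (Λ : ℝ) (χ : ℝ → ℝ) : Prop :=
  ContDiff ℝ 1 χ ∧ (∀ t, 0 ≤ χ t) ∧ (∀ t, χ t ≤ 1) ∧
    (∀ t, 0 ≤ t → t ≤ Λ - 1 → χ t = 1) ∧ (∀ t, Λ ≤ t → χ t = 0)

open Metric Set Pointwise
open scoped ENNReal

section AuxPhoton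

lemma aux_int_photon (R : ℝ) :
    IntegrableOn (fun x : EuclideanSpace ℝ (Fin 3) => ‖x‖ ^ (-(11:ℝ)/10))
      (Metric.ball 0 R) volume := by
  have hmeas : Measurable fun x : EuclideanSpace ℝ (Fin 3) => ‖x‖ ^ (-(11:ℝ)/10) := by fun_prop
  refine ⟨hmeas.aestronglyMeasurable.restrict, ?_⟩
  rw [hasFiniteIntegral_iff_ofReal (ae_of_all _ fun x => by positivity)]
  set μ' := volume.restrict (Metric.ball (0 : EuclideanSpace ℝ (Fin 3)) R)
  rw [lintegral_eq_lintegral_meas_le μ' (ae_of_all _ fun x => by positivity)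
    hmeas.aemeasurable]
  have hbd : ∀ t ∈ Ioi (1:ℝ),
      μ' {a | t ≤ ‖a‖ ^ (-(11:ℝ)/10)} ≤
        ENNReal.ofReal (t ^ (-(30:ℝ)/11)) * volume (Metric.ball (0:EuclideanSpace ℝ (Fin 3)) 1) := by
    intro t ht
    have ht1 : (1:ℝ) < t := ht
    have ht0 : (0:ℝ) < t := by linarith
    have hsub : {a : EuclideanSpace ℝ (Fin 3) | t ≤ ‖a‖ ^ (-(11:ℝ)/10)} ⊆
        Metric.closedBall 0 (t ^ (-(10:ℝ)/11)) := by
      intro a ha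
      simp only [mem_setOf_eq] at ha
      simp only [Metric.mem_closedBall, dist_zero_right]
      rcases eq_or_ne a 0 with rfl | ha0
      · simp only [norm_zero] at ha
        rw [Real.zero_rpow (by norm_num)] at ha
        linarith
      · have hna : 0 < ‖a‖ := norm_pos_iff.mpr ha0
        have h2 : (‖a‖ ^ (-(11:ℝ)/10)) ^ (-(10:ℝ)/11) ≤ t ^ (-(10:ℝ)/11) :=
          Real.rpow_le_rpow_of_nonpos ht0 ha (by norm_num)
        rw [← Real.rpow_mul hna.le] at h2
        norm_num at h2 ⊢
        exact h2
    calc μ' {a | t ≤ ‖a‖ ^ (-(11:ℝ)/10)}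
        ≤ volume (Metric.closedBall (0:EuclideanSpace ℝ (Fin 3)) (t ^ (-(10:ℝ)/11))) :=
          le_trans (Measure.restrict_apply_le _ _) (measure_mono hsub)
      _ = ENNReal.ofReal (t ^ (-(30:ℝ)/11)) * volume (Metric.ball (0:EuclideanSpace ℝ (Fin 3)) 1) := by
          rw [Measure.addHaar_closedBall _ _ (by positivity)]
          congr 2
          have h3 : Module.finrank ℝ (EuclideanSpace ℝ (Fin 3)) = 3 := by simp
          rw [h3, ← Real.rpow_natCast (t ^ (-(10:ℝ)/11)) 3, ← Real.rpow_mul ht0.le]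
          norm_num
  calc ∫⁻ t in Ioi 0, μ' {a | t ≤ ‖a‖ ^ (-(11:ℝ)/10)}
      ≤ ∫⁻ t in Ioc 0 1 ∪ Ioi 1, μ' {a | t ≤ ‖a‖ ^ (-(11:ℝ)/10)} :=
        lintegral_mono_set Ioi_subset_Ioc_union_Ioi
    _ ≤ (∫⁻ t in Ioc 0 1, μ' {a | t ≤ ‖a‖ ^ (-(11:ℝ)/10)})
        + ∫⁻ t in Ioi 1, μ' {a | t ≤ ‖a‖ ^ (-(11:ℝ)/10)} := lintegral_union_le _ _ _
    _ < ⊤ := by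
        refine ENNReal.add_lt_top.2 ⟨?_, ?_⟩
        · calc (∫⁻ t in Ioc 0 1, μ' {a | t ≤ ‖a‖ ^ (-(11:ℝ)/10)})
              ≤ ∫⁻ _ in Ioc (0:ℝ) 1, volume (Metric.ball (0:EuclideanSpace ℝ (Fin 3)) R) :=
                lintegral_mono fun t =>
                  (measure_mono (subset_univ _)).trans_eq (by simp [μ'])
            _ < ⊤ := by
                rw [setLIntegral_const]
                exact ENNReal.mul_lt_top measure_ball_lt_top measure_Ioc_lt_top
        · calc (∫⁻ t in Ioi 1, μ' {a | t ≤ ‖a‖ ^ (-(11:ℝ)/10)})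
              ≤ ∫⁻ t in Ioi (1:ℝ), ENNReal.ofReal (t ^ (-(30:ℝ)/11))
                  * volume (Metric.ball (0:EuclideanSpace ℝ (Fin 3)) 1) :=
                setLIntegral_mono' measurableSet_Ioi hbd
            _ < ⊤ := by
                rw [lintegral_mul_const' _ _ measure_ball_lt_top.ne]
                refine ENNReal.mul_lt_top ?_ measure_ball_lt_top
                refine IntegrableOn.setLIntegral_lt_top ?_
                exact integrableOn_Ioi_rpow_of_lt (by norm_num) one_pos

lemma aux_scale_photon {r : ℝ} (hr : 0 < r) :
    ∫ x in Metric.ball (0:EuclideanSpace ℝ (Fin 3)) r, ‖x‖ ^ (-(11:ℝ)/10)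
      = r ^ ((19:ℝ)/10) * ∫ x in Metric.ball (0:EuclideanSpace ℝ (Fin 3)) 1, ‖x‖ ^ (-(11:ℝ)/10) := by
  have h := Measure.setIntegral_comp_smul_of_pos volume
    (fun x : EuclideanSpace ℝ (Fin 3) => ‖x‖ ^ (-(11:ℝ)/10)) (Metric.ball 0 1) hr
  rw [smul_unitBall_of_pos hr] at h
  have h3 : Module.finrank ℝ (EuclideanSpace ℝ (Fin 3)) = 3 := by simp
  rw [h3] at h
  have hleft : (∫ x in Metric.ball (0:EuclideanSpace ℝ (Fin 3)) 1, ‖r • x‖ ^ (-(11:ℝ)/10))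
      = r ^ (-(11:ℝ)/10) * ∫ x in Metric.ball (0:EuclideanSpace ℝ (Fin 3)) 1, ‖x‖ ^ (-(11:ℝ)/10) := by
    rw [← integral_const_mul]
    refine setIntegral_congr_fun measurableSet_ball fun x _ => ?_
    rw [norm_smul, Real.norm_eq_abs, abs_of_pos hr,
      Real.mul_rpow hr.le (norm_nonneg _)]
  rw [hleft, smul_eq_mul] at h
  have h4 : (∫ x in Metric.ball (0:EuclideanSpace ℝ (Fin 3)) r, ‖x‖ ^ (-(11:ℝ)/10))
      = (r ^ (3:ℕ)) * (r ^ (-(11:ℝ)/10)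
          * ∫ x in Metric.ball (0:EuclideanSpace ℝ (Fin 3)) 1, ‖x‖ ^ (-(11:ℝ)/10)) := by
    field_simp at h ⊢
    linarith [h]
  rw [h4, ← mul_assoc]
  congr 1
  rw [← Real.rpow_natCast r 3, ← Real.rpow_add hr]
  norm_num

lemma aux_log_photon {t : ℝ} (ht : 0 < t) (ht1 : t ≤ 1) :
    1 + |Real.log t| ≤ 11 * t ^ (-(1:ℝ)/10) := by
  set u := t ^ (-(1:ℝ)/10) with hu
  have hu1 : 1 ≤ u := Real.one_le_rpow_of_pos_of_le_one_of_nonpos ht ht1 (by norm_num)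
  have hlu : Real.log u = -1/10 * Real.log t := Real.log_rpow ht _
  have hlt : Real.log t ≤ 0 := Real.log_nonpos ht.le ht1
  have habs : |Real.log t| = 10 * Real.log u := by
    rw [abs_of_nonpos hlt, hlu]; ring
  have hlogle : Real.log u ≤ u := (Real.log_le_sub_one_of_pos (by linarith)).trans (by linarith)
  rw [habs]
  nlinarith

lemma aux_log2_photon {α : ℝ} (h0 : 0 < α) (h1 : α < 1) :
    Real.log (1/α) ≤ 16 * α ^ (-(1:ℝ)/16) := by
  set u := α ^ (-(1:ℝ)/16) with hu
  have hu1 : 1 ≤ u := Real.one_le_rpow_of_pos_of_le_one_of_nonpos h0 h1.le (by norm_num)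
  have hlu : Real.log u = -1/16 * Real.log α := Real.log_rpow h0 _
  have h : Real.log (1/α) = -Real.log α := by rw [one_div, Real.log_inv]
  have hlogle : Real.log u ≤ u := (Real.log_le_sub_one_of_pos (by linarith)).trans (by linarith)
  rw [h]
  nlinarith [Real.log_nonpos h0.le h1.le]

lemma aux_core_photon (Λ : ℝ) (hΛ : 1 ≤ Λ) {t : ℝ} (ht0 : 0 < t) (htΛ : t ≤ Λ)
    {χt : ℝ} (hχ0 : 0 ≤ χt) (hχ1 : χt ≤ 1) :
    (1 + |Real.log t|) * χt ^ 2 / t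
      ≤ (11 + (1 + Real.log Λ) * Λ ^ ((11:ℝ)/10)) * t ^ (-(11:ℝ)/10) := by
  have hlogΛ : 0 ≤ Real.log Λ := Real.log_nonneg hΛ
  have hrp : (0:ℝ) < t ^ (-(11:ℝ)/10) := Real.rpow_pos_of_pos ht0 _
  have hΛrp0 : (0:ℝ) < Λ ^ ((11:ℝ)/10) := Real.rpow_pos_of_pos (by linarith) _
  have hstep : (1 + |Real.log t|) * χt ^ 2 / t ≤ (1 + |Real.log t|) / t := by
    apply div_le_div_of_nonneg_right ?_ ht0.le
    nlinarith [mul_nonneg (by positivity : (0:ℝ) ≤ 1 + |Real.log t|)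
      (sub_nonneg.2 (pow_le_one₀ hχ0 hχ1 : χt ^ 2 ≤ 1))]
  rcases le_or_gt t 1 with h1 | h1
  · calc (1 + |Real.log t|) * χt ^ 2 / t ≤ (1 + |Real.log t|) / t := hstep
      _ ≤ (11 * t ^ (-(1:ℝ)/10)) / t := by gcongr; exact aux_log_photon ht0 h1
      _ = 11 * t ^ (-(11:ℝ)/10) := by
          rw [div_eq_mul_inv, mul_assoc, ← Real.rpow_neg_one t, ← Real.rpow_add ht0]
          norm_num
      _ ≤ (11 + (1 + Real.log Λ) * Λ ^ ((11:ℝ)/10)) * t ^ (-(11:ℝ)/10) := by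
          nlinarith [mul_nonneg (mul_nonneg (by linarith : (0:ℝ) ≤ 1 + Real.log Λ) hΛrp0.le) hrp.le]
  · have habs : |Real.log t| = Real.log t := abs_of_nonneg (Real.log_nonneg h1.le)
    have hd : (1 + |Real.log t|) / t ≤ 1 + Real.log t := by
      rw [habs]
      exact div_le_self (by nlinarith [Real.log_nonneg h1.le]) h1.le
    have hlog2 : Real.log t ≤ Real.log Λ := Real.log_le_log ht0 htΛ
    have hΛt : t ^ ((11:ℝ)/10) ≤ Λ ^ ((11:ℝ)/10) := Real.rpow_le_rpow ht0.le htΛ (by norm_num)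
    have hinv : t ^ (-(11:ℝ)/10) = (t ^ ((11:ℝ)/10))⁻¹ := by
      rw [show (-(11:ℝ)/10) = -((11:ℝ)/10) by norm_num, Real.rpow_neg ht0.le]
    have h2 : (1:ℝ) ≤ Λ ^ ((11:ℝ)/10) * t ^ (-(11:ℝ)/10) := by
      rw [hinv, ← div_eq_mul_inv, le_div_iff₀ (Real.rpow_pos_of_pos ht0 _), one_mul]
      exact hΛt
    calc (1 + |Real.log t|) * χt ^ 2 / t ≤ (1 + |Real.log t|) / t := hstep
      _ ≤ 1 + Real.log Λ := hd.trans (by linarith)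
      _ ≤ (1 + Real.log Λ) * (Λ ^ ((11:ℝ)/10) * t ^ (-(11:ℝ)/10)) := by
          nlinarith [mul_nonneg (by linarith : (0:ℝ) ≤ 1 + Real.log Λ)
            (by linarith : (0:ℝ) ≤ Λ ^ ((11:ℝ)/10) * t ^ (-(11:ℝ)/10) - 1)]
      _ ≤ (11 + (1 + Real.log Λ) * Λ ^ ((11:ℝ)/10)) * t ^ (-(11:ℝ)/10) := by nlinarith [hrp]

end AuxPhoton


set_option maxHeartbeats 1000000 in
/-- Quantitative core of the improved photon number bound
`‖N_f^{1/2} R‖² = O(α^{33/16})`: any nonnegative measurable `f` dominated a.e.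
by `C α^{-3/2} (1 + |log|k||) χ_Λ(|k|)²/|k|` and with field-energy weighted
integral `∫ |k| f ≤ C α⁴ log(1/α)` satisfies `∫ f ≤ C' α^{33/16}`. -/
theorem improved_photon_number_bound (Λ : ℝ) (hΛ : 2 ≤ Λ) (χ : ℝ → ℝ)
    (hχ : IsUVCutoff Λ χ) (C : ℝ) (hC : 0 < C) :
    ∃ C' > (0 : ℝ), ∃ α₀ ∈ Set.Ioo (0 : ℝ) 1, ∀ α ∈ Set.Ioo (0 : ℝ) α₀,
      ∀ f : EuclideanSpace ℝ (Fin 3) → ℝ, Measurable f → (∀ k, 0 ≤ f k) →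
        (∀ᵐ k : EuclideanSpace ℝ (Fin 3) ∂volume,
          f k ≤ C * α ^ (-(3 : ℝ) / 2) * (1 + |Real.log ‖k‖|) * (χ ‖k‖) ^ 2 / ‖k‖) →
        (∫ k : EuclideanSpace ℝ (Fin 3), ‖k‖ * f k ≤ C * α ^ 4 * Real.log (1 / α)) →
        ∫ k : EuclideanSpace ℝ (Fin 3), f k ≤ C' * α ^ ((33 : ℝ) / 16) := by
  obtain ⟨hχC1, hχnn, hχle, hχeq, hχzero⟩ := hχ
  set c := ∫ x in Metric.ball (0:EuclideanSpace ℝ (Fin 3)) 1, ‖x‖ ^ (-(11:ℝ)/10) with hc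
  have hcnn : 0 ≤ c := integral_nonneg fun x => by positivity
  refine ⟨C * (11 * c + 16), mul_pos hC (by linarith), 1/2, by norm_num, ?_⟩
  rintro α ⟨hα0, hα2⟩ f hmf hf0 hfae hint
  have hα1 : α < 1 := by linarith
  set r := α ^ ((15:ℝ)/8) with hrdef
  have hr0 : 0 < r := Real.rpow_pos_of_pos hα0 _
  have hr1 : r ≤ 1 := Real.rpow_le_one hα0.le hα1.le (by norm_num)
  have hΛ0 : (0:ℝ) < Λ := by linarith
  have hΛ1 : (1:ℝ) ≤ Λ := by linarith
  have hlogΛ : 0 ≤ Real.log Λ := Real.log_nonneg hΛ1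
  have hΛrp0 : (0:ℝ) < Λ ^ ((11:ℝ)/10) := Real.rpow_pos_of_pos hΛ0 _
  set M : ℝ := 11 + (1 + Real.log Λ) * Λ ^ ((11:ℝ)/10) with hM
  have hM0 : 0 < M := by
    have hP := mul_nonneg (by linarith : (0:ℝ) ≤ 1 + Real.log Λ) hΛrp0.le
    rw [hM]; linarith
  set A : ℝ := C * α ^ (-(3:ℝ)/2) with hA
  have hA0 : 0 < A := mul_pos hC (Real.rpow_pos_of_pos hα0 _)
  set K : ℝ := A * M with hK
  have hK0 : 0 ≤ K := le_of_lt (mul_pos hA0 hM0)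
  set H : EuclideanSpace ℝ (Fin 3) → ℝ :=
    fun k => K * Set.indicator (Metric.ball (0:EuclideanSpace ℝ (Fin 3)) Λ)
      (fun k => ‖k‖ ^ (-(11:ℝ)/10)) k with hH
  have h0ae : ∀ᵐ k : EuclideanSpace ℝ (Fin 3) ∂volume, k ≠ 0 :=
    compl_mem_ae_iff.mpr (measure_singleton 0)
  -- a.e. domination f ≤ H
  have hgH : ∀ᵐ k : EuclideanSpace ℝ (Fin 3) ∂volume, f k ≤ H k := by
    filter_upwards [hfae, h0ae] with k hfk hk0
    have ht0 : 0 < ‖k‖ := norm_pos_iff.mpr hk0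
    by_cases htΛ : ‖k‖ < Λ
    · have hmem : k ∈ Metric.ball (0:EuclideanSpace ℝ (Fin 3)) Λ := mem_ball_zero_iff.mpr htΛ
      rw [hH]
      simp only [Set.indicator_of_mem hmem]
      refine hfk.trans ?_
      have hcore := aux_core_photon Λ hΛ1 ht0 htΛ.le (hχnn ‖k‖) (hχle ‖k‖)
      calc C * α ^ (-(3:ℝ)/2) * (1 + |Real.log ‖k‖|) * (χ ‖k‖) ^ 2 / ‖k‖
          = A * ((1 + |Real.log ‖k‖|) * (χ ‖k‖) ^ 2 / ‖k‖) := by rw [hA]; ring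
        _ ≤ A * (M * ‖k‖ ^ (-(11:ℝ)/10)) := by
            exact mul_le_mul_of_nonneg_left hcore hA0.le
        _ = K * ‖k‖ ^ (-(11:ℝ)/10) := by rw [hK]; ring
    · have hzero : χ ‖k‖ = 0 := hχzero _ (not_lt.mp htΛ)
      have hmem : k ∉ Metric.ball (0:EuclideanSpace ℝ (Fin 3)) Λ := by
        simp [mem_ball_zero_iff]; linarith [not_lt.mp htΛ]
      rw [hH]
      simp only [Set.indicator_of_notMem hmem, mul_zero]
      calc f k ≤ C * α ^ (-(3:ℝ)/2) * (1 + |Real.log ‖k‖|) * (χ ‖k‖) ^ 2 / ‖k‖ := hfk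
        _ = 0 := by rw [hzero]; ring
  have hHnn : ∀ k, 0 ≤ H k :=
    fun k => mul_nonneg hK0 (Set.indicator_nonneg (fun x _ => by positivity) k)
  have hHint : Integrable H volume :=
    ((aux_int_photon Λ).integrable_indicator measurableSet_ball).const_mul K
  have hfint : Integrable f volume := by
    refine hHint.mono' hmf.aestronglyMeasurable ?_
    filter_upwards [hgH] with k hk
    rw [Real.norm_eq_abs, abs_of_nonneg (hf0 k)]
    exact hk
  have hkfint : Integrable (fun k : EuclideanSpace ℝ (Fin 3) => ‖k‖ * f k) volume := by
    refine (hHint.const_mul Λ).mono' (measurable_norm.mul hmf).aestronglyMeasurable ?_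
    filter_upwards [hgH] with k hk
    rw [Real.norm_eq_abs, abs_of_nonneg (mul_nonneg (norm_nonneg k) (hf0 k))]
    by_cases hkΛ : ‖k‖ ≤ Λ
    · calc ‖k‖ * f k ≤ Λ * f k := mul_le_mul_of_nonneg_right hkΛ (hf0 k)
        _ ≤ Λ * H k := mul_le_mul_of_nonneg_left hk hΛ0.le
    · have hmem : k ∉ Metric.ball (0:EuclideanSpace ℝ (Fin 3)) Λ := by
        simp [mem_ball_zero_iff]; linarith [not_le.mp hkΛ]
      have hH0 : H k = 0 := by rw [hH]; simp [Set.indicator_of_notMem hmem]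
      have hfk0 : f k = 0 := le_antisymm (hH0 ▸ hk) (hf0 k)
      simp [hfk0, hH0]
  -- split the integral
  have hsplit : (∫ k in Metric.ball (0:EuclideanSpace ℝ (Fin 3)) r, f k)
      + ∫ k in (Metric.ball (0:EuclideanSpace ℝ (Fin 3)) r)ᶜ, f k
      = ∫ k : EuclideanSpace ℝ (Fin 3), f k :=
    integral_add_compl measurableSet_ball hfint
  -- inner bound
  have hball_ae : ∀ᵐ k ∂(volume.restrict (Metric.ball (0:EuclideanSpace ℝ (Fin 3)) r)),
      f k ≤ (11 * A) * ‖k‖ ^ (-(11:ℝ)/10) := by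
    rw [ae_restrict_iff' measurableSet_ball]
    filter_upwards [hfae, h0ae] with k hfk hk0 hmem
    have ht0 : 0 < ‖k‖ := norm_pos_iff.mpr hk0
    have ht1 : ‖k‖ ≤ 1 := le_trans (mem_ball_zero_iff.mp hmem).le hr1
    refine hfk.trans ?_
    have h1 : (1 + |Real.log ‖k‖|) * (χ ‖k‖) ^ 2 / ‖k‖ ≤ 11 * ‖k‖ ^ (-(11:ℝ)/10) := by
      have hnum : (1 + |Real.log ‖k‖|) * (χ ‖k‖) ^ 2 ≤ 1 + |Real.log ‖k‖| := by
        nlinarith [mul_nonneg (by positivity : (0:ℝ) ≤ 1 + |Real.log ‖k‖|)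
          (sub_nonneg.2 (pow_le_one₀ (hχnn ‖k‖) (hχle ‖k‖) : (χ ‖k‖) ^ 2 ≤ 1))]
      calc (1 + |Real.log ‖k‖|) * (χ ‖k‖) ^ 2 / ‖k‖
          ≤ (1 + |Real.log ‖k‖|) / ‖k‖ := div_le_div_of_nonneg_right hnum ht0.le
        _ ≤ (11 * ‖k‖ ^ (-(1:ℝ)/10)) / ‖k‖ := by gcongr; exact aux_log_photon ht0 ht1
        _ = 11 * ‖k‖ ^ (-(11:ℝ)/10) := by
            rw [div_eq_mul_inv, mul_assoc, ← Real.rpow_neg_one ‖k‖, ← Real.rpow_add ht0]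
            norm_num
    calc C * α ^ (-(3:ℝ)/2) * (1 + |Real.log ‖k‖|) * (χ ‖k‖) ^ 2 / ‖k‖
        = A * ((1 + |Real.log ‖k‖|) * (χ ‖k‖) ^ 2 / ‖k‖) := by rw [hA]; ring
      _ ≤ A * (11 * ‖k‖ ^ (-(11:ℝ)/10)) := mul_le_mul_of_nonneg_left h1 hA0.le
      _ = (11 * A) * ‖k‖ ^ (-(11:ℝ)/10) := by ring
  have hinner : (∫ k in Metric.ball (0:EuclideanSpace ℝ (Fin 3)) r, f k)
      ≤ 11 * C * c * α ^ ((33:ℝ)/16) := by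
    have h2 : (∫ k in Metric.ball (0:EuclideanSpace ℝ (Fin 3)) r, f k)
        ≤ ∫ k in Metric.ball (0:EuclideanSpace ℝ (Fin 3)) r, (11 * A) * ‖k‖ ^ (-(11:ℝ)/10) :=
      integral_mono_ae hfint.integrableOn ((aux_int_photon r).const_mul _) hball_ae
    have h3 : (∫ k in Metric.ball (0:EuclideanSpace ℝ (Fin 3)) r, (11 * A) * ‖k‖ ^ (-(11:ℝ)/10))
        = (11 * A) * (r ^ ((19:ℝ)/10) * c) := by
      rw [integral_const_mul, aux_scale_photon hr0, hc]
    have h4 : α ^ (-(3:ℝ)/2) * α ^ ((15:ℝ)/8 * ((19:ℝ)/10)) = α ^ ((33:ℝ)/16) := by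
      rw [← Real.rpow_add hα0]; norm_num
    have h5 : (11 * A) * (r ^ ((19:ℝ)/10) * c) = 11 * C * c * α ^ ((33:ℝ)/16) := by
      rw [hA, hrdef, ← Real.rpow_mul hα0.le, ← h4]; ring
    linarith [h2, h3.le, h5.le]
  -- outer bound
  have hcompl_ae : ∀ k, k ∈ (Metric.ball (0:EuclideanSpace ℝ (Fin 3)) r)ᶜ →
      r * f k ≤ ‖k‖ * f k := by
    intro k hk
    have : r ≤ ‖k‖ := not_lt.mp (fun h => hk (mem_ball_zero_iff.mpr h))
    exact mul_le_mul_of_nonneg_right this (hf0 k)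
  have houter : (∫ k in (Metric.ball (0:EuclideanSpace ℝ (Fin 3)) r)ᶜ, f k)
      ≤ 16 * C * α ^ ((33:ℝ)/16) := by
    have hstep1 : r * ∫ k in (Metric.ball (0:EuclideanSpace ℝ (Fin 3)) r)ᶜ, f k
        ≤ ∫ k : EuclideanSpace ℝ (Fin 3), ‖k‖ * f k := by
      rw [← integral_const_mul]
      calc (∫ k in (Metric.ball (0:EuclideanSpace ℝ (Fin 3)) r)ᶜ, r * f k)
          ≤ ∫ k in (Metric.ball (0:EuclideanSpace ℝ (Fin 3)) r)ᶜ, ‖k‖ * f k := by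
            exact integral_mono_ae ((hfint.const_mul r).integrableOn)
              hkfint.integrableOn
              ((ae_restrict_iff' measurableSet_ball.compl).mpr (ae_of_all _ hcompl_ae))
        _ ≤ ∫ k : EuclideanSpace ℝ (Fin 3), ‖k‖ * f k :=
            setIntegral_le_integral hkfint
              (ae_of_all _ fun k => mul_nonneg (norm_nonneg k) (hf0 k))
    have hstep2 : r * ∫ k in (Metric.ball (0:EuclideanSpace ℝ (Fin 3)) r)ᶜ, f k
        ≤ C * α ^ 4 * Real.log (1/α) := le_trans hstep1 hint
    have hlog : Real.log (1/α) ≤ 16 * α ^ (-(1:ℝ)/16) := aux_log2_photon hα0 hα1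
    have hα4 : (0:ℝ) ≤ C * α ^ 4 := by positivity
    have hstep3 : C * α ^ 4 * Real.log (1/α) ≤ 16 * C * (α ^ 4 * α ^ (-(1:ℝ)/16)) := by
      nlinarith [mul_le_mul_of_nonneg_left hlog hα4]
    have heq : α ^ 4 * α ^ (-(1:ℝ)/16) = α ^ ((33:ℝ)/16) * r := by
      rw [hrdef, show (α:ℝ)^(4:ℕ) = α ^ ((4:ℕ):ℝ) from (Real.rpow_natCast α 4).symm,
        ← Real.rpow_add hα0, ← Real.rpow_add hα0]
      norm_num
    have hfin : (∫ k in (Metric.ball (0:EuclideanSpace ℝ (Fin 3)) r)ᶜ, f k)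
        ≤ (16 * C * α ^ ((33:ℝ)/16)) := by
      have h6 : r * ∫ k in (Metric.ball (0:EuclideanSpace ℝ (Fin 3)) r)ᶜ, f k
          ≤ r * (16 * C * α ^ ((33:ℝ)/16)) := by
        calc r * ∫ k in (Metric.ball (0:EuclideanSpace ℝ (Fin 3)) r)ᶜ, f k
            ≤ 16 * C * (α ^ 4 * α ^ (-(1:ℝ)/16)) := le_trans hstep2 hstep3
          _ = r * (16 * C * α ^ ((33:ℝ)/16)) := by
              rw [heq]; ring
      exact le_of_mul_le_mul_left h6 hr0
    exact hfin
  rw [← hsplit]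
  have : C * (11 * c + 16) * α ^ ((33:ℝ)/16)
      = 11 * C * c * α ^ ((33:ℝ)/16) + 16 * C * α ^ ((33:ℝ)/16) := by ring
  linarith [hinner, houter]
end

section
/- Let Λ ≥ 2, let χ_Λ be an ultraviolet cutoff function, and fix c > 0. There exist C > 0 and α₀ ∈ (0, 1) such that for all α ∈ (0, α₀), | ∫_{ℝ³} χ_Λ(|k|)² / ( |k| (|k| + |k|²) (|k| + |k|² + c α²) ) dk − 8π log(1/α) | ≤ C. -/
/-!
In polar coordinates the integral is `4π ∫₀^Λ χ(r)² / ((1 + r)(r² + r + P)) dr` with `P = cα²`.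
On `[0, 1]` the cutoff equals `1` and the integrand is within `2` of `1 / (r + P)`, whose integral
`log ((1 + P) / P) = 2 log (1/α) + O(1)` carries the whole divergence; on `[1, Λ]` the integrand
is bounded by `1`.
-/

open MeasureTheory

open Real Set

theorem integral_fun_norm_euclideanSpace_fin_three (f : ℝ → ℝ) :
    ∫ k : EuclideanSpace ℝ (Fin 3), f ‖k‖ = 4 * π * ∫ r in Ioi (0 : ℝ), r ^ 2 * f r := by
  rw [integral_fun_norm_addHaar, finrank_euclideanSpace_fin, measureReal_def,
    EuclideanSpace.volume_ball_fin_three, ENNReal.toReal_mul, ENNReal.toReal_ofReal (by positivity)]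
  simp only [ENNReal.toReal_pow, ENNReal.toReal_ofReal zero_le_one, smul_eq_mul, nsmul_eq_mul]
  push_cast
  ring

theorem integral_inv_add_zero_one {P : ℝ} (hP : 0 < P) :
    ∫ x in (0 : ℝ)..1, (x + P)⁻¹ = log ((1 + P) / P) := by
  rw [intervalIntegral.integral_comp_add_right (fun x => x⁻¹) P, zero_add,
    integral_inv_of_pos hP (by linarith)]

theorem abs_inv_add_sub_inv_mul_le_two {x P : ℝ} (hx : 0 ≤ x) (hP : 0 < P) :
    |(x + P)⁻¹ - ((1 + x) * (x ^ 2 + x + P))⁻¹| ≤ 2 := by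
  have hdiff : (x + P)⁻¹ - ((1 + x) * (x ^ 2 + x + P))⁻¹
      = x * (x ^ 2 + 2 * x + P) / ((x + P) * ((1 + x) * (x ^ 2 + x + P))) := by
    field_simp
    ring
  rw [hdiff, abs_of_nonneg (by positivity), div_le_iff₀ (by positivity)]
  calc x * (x ^ 2 + 2 * x + P) ≤ (x + P) * (2 * ((1 + x) * (x ^ 2 + x + P))) := by
        gcongr
        · linarith
        · nlinarith
    _ = 2 * ((x + P) * ((1 + x) * (x ^ 2 + x + P))) := by ring

theorem abs_log_one_add_div_sub_two_log_inv_le {c α : ℝ} (hc : 0 < c) (hα : 0 < α)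
    (hα₁ : α ≤ 1) :
    |log ((1 + c * α ^ 2) / (c * α ^ 2)) - 2 * log (1 / α)| ≤ log (1 + c) + |log c| := by
  have hP : 0 < c * α ^ 2 := by positivity
  have hPc : c * α ^ 2 ≤ c := mul_le_of_le_one_right hc.le (pow_le_one₀ hα.le hα₁)
  have hlog : log ((1 + c * α ^ 2) / (c * α ^ 2)) - 2 * log (1 / α)
      = log (1 + c * α ^ 2) - log c := by
    rw [log_div (by positivity) hP.ne', log_mul hc.ne' (by positivity), log_pow, one_div,
      log_inv]
    push_cast
    ring
  have h₀ : 0 ≤ log (1 + c * α ^ 2) := log_nonneg (by linarith)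
  have h₁ : log (1 + c * α ^ 2) ≤ log (1 + c) := log_le_log (by linarith) (by linarith)
  rw [hlog]
  calc |log (1 + c * α ^ 2) - log c| ≤ |log (1 + c * α ^ 2)| + |log c| := abs_sub _ _
    _ ≤ log (1 + c) + |log c| := by rw [abs_of_nonneg h₀]; linarith

/-- `r² · χ(r)² / (r (r + r²) (r + r² + P))`, the radial integrand in polar coordinates, with the
factor `r²` cancelled. -/
noncomputable def cutoffRadialDensity (χ : ℝ → ℝ) (P r : ℝ) : ℝ :=
  χ r ^ 2 / ((1 + r) * (r ^ 2 + r + P))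

theorem integral_cutoff_euclideanSpace_fin_three (χ : ℝ → ℝ) (P : ℝ) :
    ∫ k : EuclideanSpace ℝ (Fin 3), χ ‖k‖ ^ 2 / (‖k‖ * (‖k‖ + ‖k‖ ^ 2) * (‖k‖ + ‖k‖ ^ 2 + P))
      = 4 * π * ∫ r in Ioi (0 : ℝ), cutoffRadialDensity χ P r := by
  rw [integral_fun_norm_euclideanSpace_fin_three
    (fun r => χ r ^ 2 / (r * (r + r ^ 2) * (r + r ^ 2 + P)))]
  congr 1
  refine setIntegral_congr_fun measurableSet_Ioi fun r hr => ?_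
  have hr : r ^ 2 ≠ 0 := pow_ne_zero 2 (ne_of_gt hr)
  rw [cutoffRadialDensity, show r * (r + r ^ 2) * (r + r ^ 2 + P)
      = r ^ 2 * ((1 + r) * (r ^ 2 + r + P)) by ring, mul_div_assoc', mul_div_mul_left _ _ hr]

namespace IsUVCutoff

variable {Λ : ℝ} {χ : ℝ → ℝ}

theorem sq_le_one (hχ : IsUVCutoff Λ χ) (t : ℝ) : χ t ^ 2 ≤ 1 :=
  pow_le_one₀ (hχ.2.1 t) (hχ.2.2.1 t)

theorem continuousOn_cutoffRadialDensity (hχ : IsUVCutoff Λ χ) {P : ℝ} (hP : 0 < P) :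
    ContinuousOn (cutoffRadialDensity χ P) (Ici 0) := by
  refine ((hχ.1.continuous.pow 2).continuousOn).div (by fun_prop) fun r (hr : 0 ≤ r) => ?_
  positivity

theorem intervalIntegrable_cutoffRadialDensity (hχ : IsUVCutoff Λ χ) {P : ℝ} (hP : 0 < P)
    {a b : ℝ} (ha : 0 ≤ a) (hb : 0 ≤ b) :
    IntervalIntegrable (cutoffRadialDensity χ P) volume a b :=
  (hχ.continuousOn_cutoffRadialDensity hP |>.mono fun _ hr => le_trans (le_min ha hb) hr.1)
    |>.intervalIntegrable

theorem integral_Ioi_cutoffRadialDensity (hχ : IsUVCutoff Λ χ) (hΛ : 1 ≤ Λ) {P : ℝ}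
    (hP : 0 < P) :
    ∫ r in Ioi (0 : ℝ), cutoffRadialDensity χ P r
      = (∫ r in (0 : ℝ)..1, cutoffRadialDensity χ P r)
        + ∫ r in (1 : ℝ)..Λ, cutoffRadialDensity χ P r := by
  have hcont := hχ.continuousOn_cutoffRadialDensity hP
  have hvanish : ∀ r ∈ Ioi Λ, cutoffRadialDensity χ P r = 0 := fun r hr => by
    simp [cutoffRadialDensity, hχ.2.2.2.2 r (le_of_lt hr)]
  rw [← Ioc_union_Ioi_eq_Ioi (by linarith : (0 : ℝ) ≤ Λ),
    setIntegral_union (Ioc_disjoint_Ioi le_rfl) measurableSet_Ioi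
      ((hcont.mono Icc_subset_Ici_self).integrableOn_Icc.mono_set Ioc_subset_Icc_self)
      ((integrableOn_congr_fun (fun r hr => (hvanish r hr).symm) measurableSet_Ioi).mp
        integrableOn_zero),
    setIntegral_eq_zero_of_forall_eq_zero hvanish, add_zero,
    ← intervalIntegral.integral_of_le (by linarith),
    intervalIntegral.integral_add_adjacent_intervals
      (hχ.intervalIntegrable_cutoffRadialDensity hP le_rfl zero_le_one)
      (hχ.intervalIntegrable_cutoffRadialDensity hP zero_le_one (by linarith))]

theorem abs_integral_cutoffRadialDensity_zero_one_sub_log_le (hχ : IsUVCutoff Λ χ)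
    (hΛ : 2 ≤ Λ) {P : ℝ} (hP : 0 < P) :
    |(∫ r in (0 : ℝ)..1, cutoffRadialDensity χ P r) - log ((1 + P) / P)| ≤ 2 := by
  have hinv : IntervalIntegrable (fun r => (r + P)⁻¹) volume 0 1 :=
    (ContinuousOn.inv₀ (by fun_prop) fun r hr => by
      rw [uIcc_of_le zero_le_one] at hr; linarith [hr.1]).intervalIntegrable
  rw [← integral_inv_add_zero_one hP, ← intervalIntegral.integral_sub
    (hχ.intervalIntegrable_cutoffRadialDensity hP le_rfl zero_le_one) hinv, ← Real.norm_eq_abs]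
  calc _ ≤ 2 * |(1 : ℝ) - 0| := intervalIntegral.norm_integral_le_of_norm_le_const fun r hr => ?_
    _ = 2 := by norm_num
  rw [uIoc_of_le zero_le_one] at hr
  have hχr : χ r = 1 := hχ.2.2.2.1 r hr.1.le (by linarith [hr.2])
  rw [Real.norm_eq_abs, abs_sub_comm, cutoffRadialDensity, hχr, one_pow, one_div]
  exact abs_inv_add_sub_inv_mul_le_two hr.1.le hP

theorem abs_integral_cutoffRadialDensity_one_le (hχ : IsUVCutoff Λ χ) (hΛ : 1 ≤ Λ) {P : ℝ}
    (hP : 0 < P) :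
    |∫ r in (1 : ℝ)..Λ, cutoffRadialDensity χ P r| ≤ Λ - 1 := by
  rw [← Real.norm_eq_abs]
  calc _ ≤ 1 * |Λ - 1| := intervalIntegral.norm_integral_le_of_norm_le_const fun r hr => ?_
    _ = Λ - 1 := by rw [one_mul, abs_of_nonneg (by linarith)]
  rw [uIoc_of_le hΛ] at hr
  have hden : 1 ≤ (1 + r) * (r ^ 2 + r + P) :=
    one_le_mul_of_one_le_of_one_le (by linarith [hr.1]) (by nlinarith [hr.1])
  rw [Real.norm_eq_abs, cutoffRadialDensity, abs_of_nonneg (by positivity),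
    div_le_one (by linarith)]
  exact (hχ.sq_le_one r).trans hden

end IsUVCutoff

/-- The key integral asymptotic producing the `α⁵ log α⁻¹` term:
`∫_{ℝ³} χ_Λ(|k|)² / (|k| (|k| + |k|²) (|k| + |k|² + c α²)) dk
  = 8π log(1/α) + O(1)` as `α → 0⁺`. -/
theorem cutoff_integral_log_alpha_asymptotics (Λ : ℝ) (hΛ : 2 ≤ Λ) (χ : ℝ → ℝ)
    (hχ : IsUVCutoff Λ χ) (c : ℝ) (hc : 0 < c) :
    ∃ C > (0 : ℝ), ∃ α₀ ∈ Set.Ioo (0 : ℝ) 1, ∀ α ∈ Set.Ioo (0 : ℝ) α₀,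
      |(∫ k : EuclideanSpace ℝ (Fin 3),
          (χ ‖k‖) ^ 2 / (‖k‖ * (‖k‖ + ‖k‖ ^ 2) * (‖k‖ + ‖k‖ ^ 2 + c * α ^ 2)))
        - 8 * Real.pi * Real.log (1 / α)| ≤ C := by
  have hC : 0 < 2 + (Λ - 1) + (log (1 + c) + |log c|) := by
    linarith [log_nonneg (by linarith : (1 : ℝ) ≤ 1 + c), abs_nonneg (log c)]
  refine ⟨4 * π * (2 + (Λ - 1) + (log (1 + c) + |log c|)), mul_pos (by positivity) hC, 1 / 2,
    by norm_num, fun α ⟨hα, hα₀⟩ => ?_⟩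
  have hP : 0 < c * α ^ 2 := by positivity
  have hnear := hχ.abs_integral_cutoffRadialDensity_zero_one_sub_log_le hΛ hP
  have hfar := hχ.abs_integral_cutoffRadialDensity_one_le (by linarith) hP
  have hlog := abs_log_one_add_div_sub_two_log_inv_le hc hα (by linarith)
  rw [integral_cutoff_euclideanSpace_fin_three,
    hχ.integral_Ioi_cutoffRadialDensity (by linarith) hP]
  set A := ∫ r in (0 : ℝ)..1, cutoffRadialDensity χ (c * α ^ 2) r
  set B := ∫ r in (1 : ℝ)..Λ, cutoffRadialDensity χ (c * α ^ 2) r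
  set K := log ((1 + c * α ^ 2) / (c * α ^ 2))
  rw [show 4 * π * (A + B) - 8 * π * log (1 / α) = 4 * π * ((A - K) + B + (K - 2 * log (1 / α)))
    by ring, abs_mul, abs_of_pos (by positivity)]
  gcongr
  exact (abs_add_le _ _).trans (add_le_add ((abs_add_le _ _).trans (add_le_add hnear hfar)) hlog)
end

section
/- Let Λ ≥ 2 and let χ_Λ be an ultraviolet cutoff function. There exists C > 0 such that for all β ∈ (0, 1/2], ∫_{ℝ⁹} χ_Λ(|k₁|)² χ_Λ(|k₂|)² χ_Λ(|k₃|)² / [ (|k₁| + |k₂| + |k₃| + |k₁ + k₂ + k₃|²)² · |k₁| |k₂| |k₃| · (|k₁| + |k₁|² + β)² ] dk₁ dk₂ dk₃ ≤ C log(1/β). -/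
/-!
On the support of the integrand all three momenta have norm at most `Λ`, and the denominator
dominates `|k₁| (|k₁| + β)² |k₂|² |k₃|²`: its first factor is at least `|k₂| |k₃|`, and `|k₁|²` may be
dropped from the last one. This dominating function is a product of radial functions, so the
nine-dimensional integral factorizes into three integrals over `ℝ³`. In polar coordinates these are
`∫₀^Λ dr = Λ` (twice) and `∫₀^Λ r (r + β)⁻² dr ≤ log ((Λ + β) / β) = O(log β⁻¹)`.
-/

open MeasureTheory

open Measure Set ENNReal

theorem lintegral_fun_norm_addHaar {E : Type*} [NormedAddCommGroup E] [NormedSpace ℝ E]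
    [MeasurableSpace E] [BorelSpace E] [Nontrivial E] [FiniteDimensional ℝ E]
    (μ : Measure E) [μ.IsAddHaarMeasure] {f : ℝ → ℝ≥0∞} (hf : Measurable f) :
    ∫⁻ x, f ‖x‖ ∂μ = μ.toSphere univ *
      ∫⁻ y in Ioi (0 : ℝ), ENNReal.ofReal (y ^ (Module.finrank ℝ E - 1)) * f y := by
  calc
    ∫⁻ x, f ‖x‖ ∂μ = ∫⁻ x : ({(0 : E)}ᶜ : Set E), f ‖(x : E)‖ ∂(μ.comap (↑)) := by
      rw [lintegral_subtype_comap (measurableSet_singleton 0).compl fun x ↦ f ‖x‖,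
        restrict_compl_singleton]
    _ = ∫⁻ p, f p.2 ∂(μ.toSphere.prod (volumeIoiPow (Module.finrank ℝ E - 1))) := by
      simpa using (μ.measurePreserving_homeomorphUnitSphereProd.lintegral_comp_emb
        (Homeomorph.measurableEmbedding _) (fun p ↦ f p.2))
    _ = μ.toSphere univ * ∫⁻ y, f y ∂(volumeIoiPow (Module.finrank ℝ E - 1)) := by
      simpa using lintegral_prod_mul (μ := μ.toSphere) (f := fun _ ↦ 1) aemeasurable_const
        (hf.comp measurable_subtype_coe).aemeasurable
    _ = _ := by
      rw [volumeIoiPow, lintegral_withDensity_eq_lintegral_mul _ (by fun_prop)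
        (show Measurable fun y : Ioi (0 : ℝ) ↦ f y from hf.comp measurable_subtype_coe)]
      exact congrArg _ (lintegral_subtype_comap measurableSet_Ioi
        fun y ↦ ENNReal.ofReal (y ^ (Module.finrank ℝ E - 1)) * f y)

noncomputable def softPhotonWeight (R : ℝ) : ℝ → ℝ≥0∞ :=
  (Ioc 0 R).indicator fun r ↦ ENNReal.ofReal (r ^ 2)⁻¹

noncomputable def resolventPhotonWeight (R β : ℝ) : ℝ → ℝ≥0∞ :=
  (Ioc 0 R).indicator fun r ↦ ENNReal.ofReal (r * (r + β) ^ 2)⁻¹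

theorem measurable_softPhotonWeight (R : ℝ) : Measurable (softPhotonWeight R) :=
  Measurable.indicator (by fun_prop) measurableSet_Ioc

theorem measurable_resolventPhotonWeight (R β : ℝ) : Measurable (resolventPhotonWeight R β) :=
  Measurable.indicator (by fun_prop) measurableSet_Ioc

theorem setLIntegral_sq_mul_softPhotonWeight (R : ℝ) :
    ∫⁻ y in Ioi 0, ENNReal.ofReal (y ^ 2) * softPhotonWeight R y = ENNReal.ofReal R := by
  have h (y : ℝ) : ENNReal.ofReal (y ^ 2) * softPhotonWeight R y = (Ioc 0 R).indicator 1 y := by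
    by_cases hy : y ∈ Ioc 0 R
    · have : y ^ 2 ≠ 0 := pow_ne_zero 2 hy.1.ne'
      rw [softPhotonWeight, indicator_of_mem hy, indicator_of_mem hy, ← ofReal_mul (sq_nonneg y),
        mul_inv_cancel₀ this, ofReal_one, Pi.one_apply]
    · simp [softPhotonWeight, hy]
  simp_rw [h]
  rw [lintegral_indicator_one measurableSet_Ioc, Measure.restrict_apply measurableSet_Ioc,
    Ioc_inter_Ioi, max_self, Real.volume_Ioc, sub_zero]

theorem setLIntegral_sq_mul_resolventPhotonWeight_le {R β : ℝ} (hR : 0 ≤ R) (hβ : 0 < β) :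
    ∫⁻ y in Ioi 0, ENNReal.ofReal (y ^ 2) * resolventPhotonWeight R β y
      ≤ ENNReal.ofReal (Real.log ((R + β) / β)) := by
  have h (y : ℝ) : ENNReal.ofReal (y ^ 2) * resolventPhotonWeight R β y
      ≤ (Ioc 0 R).indicator (fun r ↦ ENNReal.ofReal (r + β)⁻¹) y := by
    by_cases hy : y ∈ Ioc 0 R
    · have hy0 : 0 < y := hy.1
      rw [resolventPhotonWeight, indicator_of_mem hy, indicator_of_mem hy,
        ← ofReal_mul (sq_nonneg y)]
      refine ofReal_le_ofReal ?_
      rw [← div_eq_mul_inv, ← one_div, div_le_div_iff₀ (by positivity) (by positivity)]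
      nlinarith [mul_pos hy0 hβ]
    · simp [resolventPhotonWeight, hy]
  have hint : IntegrableOn (fun y ↦ (y + β)⁻¹) (Ioc 0 R) :=
    (ContinuousOn.integrableOn_Icc (ContinuousOn.inv₀ (by fun_prop)
      fun y hy ↦ (add_pos_of_nonneg_of_pos hy.1 hβ).ne')).mono_set Ioc_subset_Icc_self
  calc ∫⁻ y in Ioi 0, ENNReal.ofReal (y ^ 2) * resolventPhotonWeight R β y
      ≤ ∫⁻ y in Ioc 0 R, ENNReal.ofReal (y + β)⁻¹ := by
        grw [lintegral_mono h, lintegral_indicator measurableSet_Ioc,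
          restrict_restrict measurableSet_Ioc, Ioc_inter_Ioi, max_self]
    _ = ENNReal.ofReal (∫ y in Ioc 0 R, (y + β)⁻¹) :=
        (ofReal_integral_eq_lintegral_ofReal hint (ae_restrict_of_forall_mem measurableSet_Ioc
          fun y hy ↦ (inv_pos.2 (add_pos hy.1 hβ)).le)).symm
    _ = ENNReal.ofReal (Real.log ((R + β) / β)) := by
        rw [← intervalIntegral.integral_of_le hR,
          intervalIntegral.integral_comp_add_right (fun y ↦ y⁻¹), zero_add,
          integral_inv_of_pos hβ (by linarith)]

theorem three_photon_denominator_lower_bound {r₁ r₂ r₃ β : ℝ} (hr₁ : 0 ≤ r₁) (hr₂ : 0 ≤ r₂)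
    (hr₃ : 0 ≤ r₃) (hβ : 0 ≤ β) (t : ℝ) :
    r₁ * (r₁ + β) ^ 2 * (r₂ ^ 2 * r₃ ^ 2)
      ≤ (r₁ + r₂ + r₃ + t ^ 2) ^ 2 * (r₁ * r₂ * r₃) * (r₁ + r₁ ^ 2 + β) ^ 2 := by
  have h₂₃ : r₂ * r₃ ≤ (r₁ + r₂ + r₃ + t ^ 2) ^ 2 := by
    nlinarith [sq_nonneg (r₂ - r₃), mul_nonneg (add_nonneg hr₁ (sq_nonneg t)) (add_nonneg hr₂ hr₃),
      sq_nonneg (r₁ + t ^ 2)]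
  have h₁ : (r₁ + β) ^ 2 ≤ (r₁ + r₁ ^ 2 + β) ^ 2 := by
    gcongr
    nlinarith [sq_nonneg r₁]
  calc r₁ * (r₁ + β) ^ 2 * (r₂ ^ 2 * r₃ ^ 2) = r₂ * r₃ * (r₁ * r₂ * r₃) * (r₁ + β) ^ 2 := by ring
    _ ≤ _ := by gcongr

theorem eq_zero_or_eq_zero_of_notMem_Ioc {χ : ℝ → ℝ} {R r : ℝ} (hχR : ∀ t, R ≤ t → χ t = 0)
    (hr : 0 ≤ r) (h : r ∉ Ioc 0 R) : r = 0 ∨ χ r = 0 := by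
  rcases hr.eq_or_lt with hr | hr
  · exact Or.inl hr.symm
  · exact Or.inr (hχR r (le_of_lt (not_le.1 fun hrR ↦ h ⟨hr, hrR⟩)))

theorem ofReal_cutoff_ratio_le_weights {χ : ℝ → ℝ} {R β r₁ r₂ r₃ : ℝ} (hχ : ∀ t, |χ t| ≤ 1)
    (hχR : ∀ t, R ≤ t → χ t = 0) (hβ : 0 ≤ β) (hr₁ : 0 ≤ r₁) (hr₂ : 0 ≤ r₂) (hr₃ : 0 ≤ r₃)
    (t : ℝ) :
    ENNReal.ofReal (χ r₁ ^ 2 * χ r₂ ^ 2 * χ r₃ ^ 2 /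
        ((r₁ + r₂ + r₃ + t ^ 2) ^ 2 * (r₁ * r₂ * r₃) * (r₁ + r₁ ^ 2 + β) ^ 2))
      ≤ resolventPhotonWeight R β r₁ * (softPhotonWeight R r₂ * softPhotonWeight R r₃) := by
  by_cases h : r₁ ∈ Ioc 0 R ∧ r₂ ∈ Ioc 0 R ∧ r₃ ∈ Ioc 0 R
  · obtain ⟨h₁, h₂, h₃⟩ := h
    have := h₁.1; have := h₂.1; have := h₃.1
    rw [resolventPhotonWeight, softPhotonWeight, indicator_of_mem h₁, indicator_of_mem h₂,
      indicator_of_mem h₃, ← ofReal_mul (by positivity), ← ofReal_mul (by positivity),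
      ← mul_inv, ← mul_inv, ← one_div]
    have hχ₁₂₃ : χ r₁ ^ 2 * χ r₂ ^ 2 * χ r₃ ^ 2 ≤ 1 := by
      simp only [← mul_pow, sq_le_one_iff_abs_le_one, abs_mul]
      exact mul_le_one₀ (mul_le_one₀ (hχ _) (abs_nonneg _) (hχ _)) (abs_nonneg _) (hχ _)
    exact ofReal_le_ofReal (div_le_div₀ zero_le_one hχ₁₂₃ (by positivity)
      (three_photon_denominator_lower_bound hr₁ hr₂ hr₃ hβ t))
  · simp only [not_and_or] at h
    rcases h with h | h | h
    all_goals
      rcases eq_zero_or_eq_zero_of_notMem_Ioc hχR (by assumption) h with h0 | h0 <;> simp [h0]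

noncomputable def threePhotonIntegrand {E : Type*} [NormedAddCommGroup E] (χ : ℝ → ℝ) (β : ℝ)
    (k : E × E × E) : ℝ :=
  (χ ‖k.1‖) ^ 2 * (χ ‖k.2.1‖) ^ 2 * (χ ‖k.2.2‖) ^ 2 /
    ((‖k.1‖ + ‖k.2.1‖ + ‖k.2.2‖ + ‖k.1 + k.2.1 + k.2.2‖ ^ 2) ^ 2 *
      (‖k.1‖ * ‖k.2.1‖ * ‖k.2.2‖) * (‖k.1‖ + ‖k.1‖ ^ 2 + β) ^ 2)

theorem threePhotonIntegrand_nonneg {E : Type*} [NormedAddCommGroup E] (χ : ℝ → ℝ) (β : ℝ)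
    (k : E × E × E) : 0 ≤ threePhotonIntegrand χ β k := by
  unfold threePhotonIntegrand
  positivity

theorem lintegral_prod_prod_mul {α β γ : Type*} [MeasurableSpace α] [MeasurableSpace β]
    [MeasurableSpace γ] {μ : Measure α} {ν : Measure β} {ρ : Measure γ} [SFinite ν] [SFinite ρ]
    {f : α → ℝ≥0∞} {g : β → ℝ≥0∞} {h : γ → ℝ≥0∞} (hf : AEMeasurable f μ)
    (hg : AEMeasurable g ν) (hh : AEMeasurable h ρ) :
    ∫⁻ k, f k.1 * (g k.2.1 * h k.2.2) ∂μ.prod (ν.prod ρ)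
      = (∫⁻ x, f x ∂μ) * ((∫⁻ y, g y ∂ν) * ∫⁻ z, h z ∂ρ) := by
  rw [← lintegral_prod_mul hg hh]
  exact lintegral_prod_mul (g := fun p : β × γ ↦ g p.1 * h p.2) hf (hg.comp_fst.mul hh.comp_snd)

theorem log_div_le_mul_log_one_div {R β : ℝ} (hR : 0 ≤ R) (hβ : 0 < β) (hβ' : β ≤ 1 / 2) :
    Real.log ((R + β) / β) ≤ (Real.log (R + 1) / Real.log 2 + 1) * Real.log (1 / β) := by
  have hlog2 : 0 < Real.log 2 := Real.log_pos one_lt_two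
  have hlogβ : Real.log 2 ≤ Real.log (1 / β) :=
    Real.log_le_log two_pos (by rw [le_div_iff₀ hβ]; linarith)
  have hlogR : Real.log (R + 1) ≤ Real.log (R + 1) / Real.log 2 * Real.log (1 / β) := by
    rw [div_mul_eq_mul_div, le_div_iff₀ hlog2]
    exact mul_le_mul_of_nonneg_left hlogβ (Real.log_nonneg (by linarith))
  calc Real.log ((R + β) / β) ≤ Real.log ((R + 1) / β) :=
        Real.log_le_log (by positivity) (by gcongr; linarith)
    _ = Real.log (R + 1) + Real.log (1 / β) := by
        rw [div_eq_mul_one_div, Real.log_mul (by positivity) (by positivity)]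
    _ ≤ _ := by linarith

section FiniteDimensional

variable {E : Type*} [NormedAddCommGroup E] [NormedSpace ℝ E] [MeasurableSpace E] [BorelSpace E]
  [FiniteDimensional ℝ E] (μ : Measure E) [μ.IsAddHaarMeasure]

theorem lintegral_fun_norm_of_finrank_eq_three (hE : Module.finrank ℝ E = 3) {f : ℝ → ℝ≥0∞}
    (hf : Measurable f) :
    ∫⁻ x, f ‖x‖ ∂μ = μ.toSphere univ * ∫⁻ y in Ioi (0 : ℝ), ENNReal.ofReal (y ^ 2) * f y := by
  have : Nontrivial E := Module.nontrivial_of_finrank_eq_succ hE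
  rw [lintegral_fun_norm_addHaar μ hf, hE]

theorem lintegral_ofReal_threePhotonIntegrand_le (hE : Module.finrank ℝ E = 3) {χ : ℝ → ℝ}
    {R β : ℝ} (hχ : ∀ t, |χ t| ≤ 1) (hχR : ∀ t, R ≤ t → χ t = 0) (hR : 0 ≤ R) (hβ : 0 < β) :
    ∫⁻ k, ENNReal.ofReal (threePhotonIntegrand χ β k) ∂μ.prod (μ.prod μ)
      ≤ μ.toSphere univ * ENNReal.ofReal (Real.log ((R + β) / β)) *
        (μ.toSphere univ * ENNReal.ofReal R * (μ.toSphere univ * ENNReal.ofReal R)) := by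
  have hsoft := measurable_softPhotonWeight R
  have hres := measurable_resolventPhotonWeight R β
  calc ∫⁻ k, ENNReal.ofReal (threePhotonIntegrand χ β k) ∂μ.prod (μ.prod μ)
      ≤ ∫⁻ k, resolventPhotonWeight R β ‖k.1‖ *
          (softPhotonWeight R ‖k.2.1‖ * softPhotonWeight R ‖k.2.2‖) ∂μ.prod (μ.prod μ) :=
        lintegral_mono fun k ↦ ofReal_cutoff_ratio_le_weights hχ hχR hβ.le (norm_nonneg _)
          (norm_nonneg _) (norm_nonneg _) _
    _ = (∫⁻ x, resolventPhotonWeight R β ‖x‖ ∂μ) *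
          ((∫⁻ x, softPhotonWeight R ‖x‖ ∂μ) * ∫⁻ x, softPhotonWeight R ‖x‖ ∂μ) :=
        lintegral_prod_prod_mul (hres.comp measurable_norm).aemeasurable
          (hsoft.comp measurable_norm).aemeasurable (hsoft.comp measurable_norm).aemeasurable
    _ ≤ _ := by
        rw [lintegral_fun_norm_of_finrank_eq_three μ hE hres,
          lintegral_fun_norm_of_finrank_eq_three μ hE hsoft, setLIntegral_sq_mul_softPhotonWeight]
        gcongr
        exact setLIntegral_sq_mul_resolventPhotonWeight_le hR hβ

theorem exists_integral_threePhotonIntegrand_le_mul_log (hE : Module.finrank ℝ E = 3)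
    {χ : ℝ → ℝ} {R : ℝ} (hχ : ∀ t, |χ t| ≤ 1) (hχR : ∀ t, R ≤ t → χ t = 0) (hR : 0 < R) :
    ∃ C > (0 : ℝ), ∀ β ∈ Ioc (0 : ℝ) (1 / 2),
      ∫ k, threePhotonIntegrand χ β k ∂μ.prod (μ.prod μ) ≤ C * Real.log (1 / β) := by
  have : Nontrivial E := Module.nontrivial_of_finrank_eq_succ hE
  set s := (μ.toSphere univ).toReal
  have hs : 0 < s :=
    ENNReal.toReal_pos (measure_univ_pos.2 μ.toSphere_ne_zero).ne' (measure_ne_top _ _)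
  have hK : 0 < Real.log (R + 1) / Real.log 2 + 1 := by
    have := Real.log_nonneg (show 1 ≤ R + 1 by linarith)
    have := Real.log_pos one_lt_two
    positivity
  refine ⟨s ^ 3 * R ^ 2 * (Real.log (R + 1) / Real.log 2 + 1), by positivity, ?_⟩
  rintro β ⟨hβ, hβ'⟩
  have hL : 0 ≤ Real.log ((R + β) / β) := Real.log_nonneg ((one_le_div hβ).2 (by linarith))
  calc ∫ k, threePhotonIntegrand χ β k ∂μ.prod (μ.prod μ)
      ≤ (∫⁻ k, ENNReal.ofReal (threePhotonIntegrand χ β k) ∂μ.prod (μ.prod μ)).toReal := by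
        refine (Real.le_norm_self _).trans ((norm_integral_le_lintegral_norm _).trans_eq ?_)
        simp_rw [Real.norm_of_nonneg (threePhotonIntegrand_nonneg χ β _)]
    _ ≤ s * Real.log ((R + β) / β) * (s * R * (s * R)) := by
        grw [lintegral_ofReal_threePhotonIntegrand_le μ hE hχ hχR hR.le hβ]
        · simp [toReal_ofReal hL, toReal_ofReal hR.le, s]
        · finiteness
    _ = s ^ 3 * R ^ 2 * Real.log ((R + β) / β) := by ring
    _ ≤ s ^ 3 * R ^ 2 * ((Real.log (R + 1) / Real.log 2 + 1) * Real.log (1 / β)) := by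
        grw [log_div_le_mul_log_one_div hR.le hβ hβ']
    _ = _ := by ring

end FiniteDimensional

theorem three_photon_integral_bound_general (Λ : ℝ) (χ : ℝ → ℝ)
    (hχ : IsUVCutoff Λ χ) :
    ∃ C > (0 : ℝ), ∀ β ∈ Set.Ioc (0 : ℝ) (1 / 2 : ℝ),
      ∫ k : EuclideanSpace ℝ (Fin 3) × EuclideanSpace ℝ (Fin 3) × EuclideanSpace ℝ (Fin 3),
          (χ ‖k.1‖) ^ 2 * (χ ‖k.2.1‖) ^ 2 * (χ ‖k.2.2‖) ^ 2 /
            ((‖k.1‖ + ‖k.2.1‖ + ‖k.2.2‖ + ‖k.1 + k.2.1 + k.2.2‖ ^ 2) ^ 2 *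
              (‖k.1‖ * ‖k.2.1‖ * ‖k.2.2‖) * (‖k.1‖ + ‖k.1‖ ^ 2 + β) ^ 2)
        ≤ C * Real.log (1 / β) := by
  obtain ⟨-, hχ₀, hχ₁, -, hχΛ⟩ := hχ
  exact exists_integral_threePhotonIntegrand_le_mul_log volume finrank_euclideanSpace_fin
    (R := max Λ 1) (fun t ↦ abs_le.2 ⟨by linarith [hχ₀ t], hχ₁ t⟩)
    (fun t ht ↦ hχΛ t ((le_max_left Λ 1).trans ht)) (by positivity)

/-- The nine-dimensional integral estimate underlying the three-photon bound
`‖(H_f + P_f²)^{-1} A⁺·A⁺ F₀‖² = O(α³ log α⁻¹)`. -/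
theorem three_photon_integral_bound (Λ : ℝ) (hΛ : 2 ≤ Λ) (χ : ℝ → ℝ)
    (hχ : IsUVCutoff Λ χ) :
    ∃ C > (0 : ℝ), ∀ β ∈ Set.Ioc (0 : ℝ) (1 / 2 : ℝ),
      ∫ k : EuclideanSpace ℝ (Fin 3) × EuclideanSpace ℝ (Fin 3) × EuclideanSpace ℝ (Fin 3),
          (χ ‖k.1‖) ^ 2 * (χ ‖k.2.1‖) ^ 2 * (χ ‖k.2.2‖) ^ 2 /
            ((‖k.1‖ + ‖k.2.1‖ + ‖k.2.2‖ + ‖k.1 + k.2.1 + k.2.2‖ ^ 2) ^ 2 *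
              (‖k.1‖ * ‖k.2.1‖ * ‖k.2.2‖) * (‖k.1‖ + ‖k.1‖ ^ 2 + β) ^ 2)
        ≤ C * Real.log (1 / β) :=
  three_photon_integral_bound_general Λ χ hχ
end
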